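/- Let G be a signed digraph on a finite vertex set V with |V| = n and without negative cycles, and let f be a Boolean network on G. The following conditions are equivalent: (1) f has exactly one fixed point; (2) f has a synchronizing word of length n; (3) f is synchronizing. -/

import Mathlib

/-!
Without negative cycles, the signs of all walks between two vertices of a strong component
agree, so each strong component carries a switching `μ`: positive arcs preserve it and
negative arcs flip it. On an initial strong component in which every vertex has an in-arc,
this makes both `μ` and `!μ` trap subcubes; by induction on the number of vertices every
trap subcube extends to a fixed point, so such a component rules out a unique fixed point.
Hence, when the fixed point is unique, there is always a source; it is constant, so updating
it first freezes it and the induction continues on the remaining vertices, producing a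
synchronizing word of length `n`. Conversely, every word fixes every fixed point, so a
synchronizing word leaves room for only one.
-/

/-- A signed digraph on vertex set `V`, given by its positive and negative arc relations. -/
structure SignedDigraph (V : Type*) where
  pos : V → V → Prop
  neg : V → V → Prop

/-- The last vertex of a walk starting at `u` with the given steps. -/
def walkEnd {V : Type*} (u : V) (steps : List (V × Bool)) : V :=
  (steps.map Prod.fst).getLastD u

/-- The sign of a walk (`true` = positive): positive iff the number of
negative (`false`) arcs is even. -/
def walkSign {V : Type*} (steps : List (V × Bool)) : Bool :=
  steps.foldl (fun acc step => acc == step.2) true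

namespace SignedDigraph

variable {V : Type*}

/-- Arc of the underlying digraph. -/
def Arc (G : SignedDigraph V) (j i : V) : Prop := G.pos j i ∨ G.neg j i

/-- `G.IsWalk u steps`: `steps` is a list of (next vertex, sign of arc) pairs
describing a walk in `G` starting at `u`. -/
def IsWalk (G : SignedDigraph V) : V → List (V × Bool) → Prop
  | _, [] => True
  | u, step :: rest =>
      (if step.2 then G.pos u step.1 else G.neg u step.1) ∧ G.IsWalk step.1 rest

/-- A (simple) path from `u`: a walk with pairwise distinct vertices. -/
def IsPath (G : SignedDigraph V) (u : V) (steps : List (V × Bool)) : Prop :=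
  G.IsWalk u steps ∧ (u :: steps.map Prod.fst).Nodup

/-- A (simple) path from `u` to `v`. -/
def IsPathFrom (G : SignedDigraph V) (u : V) (steps : List (V × Bool)) (v : V) : Prop :=
  G.IsPath u steps ∧ walkEnd u steps = v

/-- A cycle through `u`: a nonempty closed walk from `u` back to `u` with no repeated
vertex except the endpoint. -/
def IsCycle (G : SignedDigraph V) (u : V) (steps : List (V × Bool)) : Prop :=
  steps ≠ [] ∧ G.IsWalk u steps ∧ walkEnd u steps = u ∧
    (u :: (steps.map Prod.fst).dropLast).Nodup

/-- `G` has no positive cycle. -/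
def NoPositiveCycle (G : SignedDigraph V) : Prop :=
  ∀ u steps, G.IsCycle u steps → walkSign steps = false

/-- `G` has no negative cycle. -/
def NoNegativeCycle (G : SignedDigraph V) : Prop :=
  ∀ u steps, G.IsCycle u steps → walkSign steps = true

/-- Reachability in the underlying digraph. -/
def Reach (G : SignedDigraph V) (u v : V) : Prop :=
  ∃ steps, G.IsWalk u steps ∧ walkEnd u steps = v

/-- The underlying digraph of `G` is strongly connected. -/
def StronglyConnected (G : SignedDigraph V) : Prop := ∀ u v, G.Reach u v

/-- `u` and `v` lie in the same strong component. -/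
def SameComp (G : SignedDigraph V) (u v : V) : Prop := G.Reach u v ∧ G.Reach v u

/-- The strong component of `u`. -/
def comp (G : SignedDigraph V) (u : V) : Set V := {v | G.SameComp u v}

/-- The in-degree of `i`: the number of arcs (with their signs) entering `i`. -/
noncomputable def inDegree (G : SignedDigraph V) (i : V) : ℕ :=
  {j | G.pos j i}.ncard + {j | G.neg j i}.ncard

/-- A source: a vertex with no in-coming arc. -/
def IsSource (G : SignedDigraph V) (i : V) : Prop := ∀ j, ¬ G.Arc j i

/-- `G` has no sources. -/
def NoSource (G : SignedDigraph V) : Prop := ∀ i, ¬ G.IsSource i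

/-- The subgraph induced on a set `S` of vertices. -/
def induce (G : SignedDigraph V) (S : Set V) : SignedDigraph V where
  pos j i := j ∈ S ∧ i ∈ S ∧ G.pos j i
  neg j i := j ∈ S ∧ i ∈ S ∧ G.neg j i

/-- The underlying digraph of `G` restricted to `S` is a cycle: `S` is nonempty,
every vertex of `S` has exactly one in-coming arc inside `S`, and `S` is strongly
connected inside `S`. -/
def IsCycleGraphOn (G : SignedDigraph V) (S : Set V) : Prop :=
  S.Nonempty ∧ (∀ i ∈ S, (G.induce S).inDegree i = 1) ∧
    ∀ u ∈ S, ∀ v ∈ S, (G.induce S).Reach u v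

/-- The underlying digraph of `G` is a cycle. -/
def IsCycleGraph (G : SignedDigraph V) : Prop := G.IsCycleGraphOn Set.univ

/-- `S` is an initial strong component of `G`. -/
def IsInitialComponent (G : SignedDigraph V) (S : Set V) : Prop :=
  (∃ u, S = G.comp u) ∧ ∀ j i, i ∈ S → G.Arc j i → j ∈ S

/-- `G` has an initial cycle: an initial strong component whose underlying digraph
is a cycle. -/
def HasInitialCycle (G : SignedDigraph V) : Prop :=
  ∃ S : Set V, G.IsInitialComponent S ∧ G.IsCycleGraphOn S

/-- A forward path: a nonempty path whose last arc joins two distinct strong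
components. -/
def IsForwardPath (G : SignedDigraph V) (u : V) (steps : List (V × Bool)) (v : V) : Prop :=
  G.IsPathFrom u steps v ∧ steps ≠ [] ∧ ¬ G.SameComp (walkEnd u steps.dropLast) v

/-- `G` is `i`-homogenous: every strong component contains a vertex `j` such that
all forward paths from `j` to `i` have the same sign. -/
def IsHomogenousAt (G : SignedDigraph V) (i : V) : Prop :=
  ∀ u : V, ∃ j, G.SameComp u j ∧
    ∀ steps₁ steps₂, G.IsForwardPath j steps₁ i → G.IsForwardPath j steps₂ i →
      walkSign steps₁ = walkSign steps₂

/-- `G` is homogenous. -/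
def IsHomogenous (G : SignedDigraph V) : Prop := ∀ i, G.IsHomogenousAt i

/-- `G` is simple: no pair of parallel arcs of opposite signs. -/
def IsSimple (G : SignedDigraph V) : Prop := ∀ j i, ¬ (G.pos j i ∧ G.neg j i)

end SignedDigraph

section BooleanNetwork

variable {V : Type*} [DecidableEq V]

/-- Asynchronous update of component `i` of the Boolean network `f`. -/
def localUpdate (f : (V → Bool) → V → Bool) (i : V) (x : V → Bool) : V → Bool :=
  Function.update x i (f x i)

/-- `f^w` : for `w = i₁,…,i_ℓ`, `wordUpdate f w = f^{i_ℓ} ∘ ⋯ ∘ f^{i₁}`. -/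
def wordUpdate (f : (V → Bool) → V → Bool) (w : List V) (x : V → Bool) : V → Bool :=
  w.foldl (fun y i => localUpdate f i y) x

/-- `w` is a synchronizing word for `f`: `f^w` is constant. -/
def SyncWord (f : (V → Bool) → V → Bool) (w : List V) : Prop :=
  ∃ c : V → Bool, ∀ x, wordUpdate f w x = c

/-- `f` is synchronizing. -/
def Synchronizing (f : (V → Bool) → V → Bool) : Prop := ∃ w, SyncWord f w

/-- Positive arc of the signed interaction digraph of `f`. -/
def posIArc (f : (V → Bool) → V → Bool) (j i : V) : Prop :=
  ∃ x : V → Bool, x j = false ∧ f x i = false ∧ f (Function.update x j true) i = true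

/-- Negative arc of the signed interaction digraph of `f`. -/
def negIArc (f : (V → Bool) → V → Bool) (j i : V) : Prop :=
  ∃ x : V → Bool, x j = false ∧ f x i = true ∧ f (Function.update x j true) i = false

/-- `f` is a Boolean network on `G`: the signed interaction digraph of `f` is `G`. -/
def IsBNOn (f : (V → Bool) → V → Bool) (G : SignedDigraph V) : Prop :=
  (∀ j i, G.pos j i ↔ posIArc f j i) ∧ (∀ j i, G.neg j i ↔ negIArc f j i)

/-- Component `i` of `f` is a conjunction with respect to `G`. -/
def IsConjunction (G : SignedDigraph V) (f : (V → Bool) → V → Bool) (i : V) : Prop :=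
  ∀ x : V → Bool, (f x i = true ↔
    (∀ j, G.pos j i → x j = true) ∧ (∀ j, G.neg j i → x j = false))

/-- Component `i` of `f` is a disjunction with respect to `G`. -/
def IsDisjunction (G : SignedDigraph V) (f : (V → Bool) → V → Bool) (i : V) : Prop :=
  ∀ x : V → Bool, (f x i = false ↔
    (∀ j, G.pos j i → x j = false) ∧ (∀ j, G.neg j i → x j = true))

/-- `f` is an and-or-net on `G`. -/
def IsAndOrNet (G : SignedDigraph V) (f : (V → Bool) → V → Bool) : Prop :=
  IsBNOn f G ∧ ∀ i, IsConjunction G f i ∨ IsDisjunction G f i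

/-- `f` is the and-net on `G`. -/
def IsAndNet (G : SignedDigraph V) (f : (V → Bool) → V → Bool) : Prop :=
  IsBNOn f G ∧ ∀ i, IsConjunction G f i

/-- `w` is a canalizing word from `(i, a)` with image `b`. -/
def Canalizing (f : (V → Bool) → V → Bool) (i : V) (a : Bool) (w : List V)
    (b : V → Bool) : Prop :=
  i ∉ w ∧ w.Nodup ∧ ∀ x : V → Bool, x i = a → ∀ j ∈ w, wordUpdate f w x j = b j

end BooleanNetwork

section Walks

variable {V : Type*}

lemma walkEnd_cons (u : V) (st : V × Bool) (s : List (V × Bool)) :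
    walkEnd u (st :: s) = walkEnd st.1 s := by
  rw [walkEnd, walkEnd, List.map_cons, List.getLastD_cons]

lemma walkEnd_append (u : V) (s t : List (V × Bool)) :
    walkEnd u (s ++ t) = walkEnd (walkEnd u s) t := by
  induction s generalizing u with
  | nil => rfl
  | cons st s ih => simp only [List.cons_append, walkEnd_cons, ih]

lemma walkEnd_concat (u : V) (s : List (V × Bool)) (st : V × Bool) :
    walkEnd u (s ++ [st]) = st.1 := by
  rw [walkEnd_append]; rfl

lemma walkEnd_mem (u : V) (s : List (V × Bool)) : walkEnd u s ∈ u :: s.map Prod.fst :=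
  List.getLastD_mem_cons

lemma foldl_walkSign (s : List (V × Bool)) (a : Bool) :
    s.foldl (fun acc step => acc == step.2) a = (a == walkSign s) := by
  induction s generalizing a with
  | nil => cases a <;> rfl
  | cons st s ih =>
    simp only [walkSign, List.foldl_cons]
    rw [ih, ih]
    cases a <;> cases st.2 <;> cases walkSign s <;> rfl

lemma walkSign_append (s t : List (V × Bool)) :
    walkSign (s ++ t) = (walkSign s == walkSign t) := by
  rw [walkSign, List.foldl_append, foldl_walkSign]; rfl

lemma walkSign_concat (s : List (V × Bool)) (st : V × Bool) :
    walkSign (s ++ [st]) = (walkSign s == st.2) := by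
  obtain ⟨v, b⟩ := st
  rw [walkSign_append]; cases b <;> rfl

lemma exists_append_walkEnd_eq {u v : V} {p : List (V × Bool)} (hv : v ∈ u :: p.map Prod.fst) :
    ∃ p₁ p₂, p = p₁ ++ p₂ ∧ walkEnd u p₁ = v := by
  rcases List.mem_cons.1 hv with rfl | hv
  · exact ⟨[], p, rfl, rfl⟩
  · obtain ⟨st, hst, rfl⟩ := List.mem_map.1 hv
    obtain ⟨s, t, rfl⟩ := List.append_of_mem hst
    exact ⟨s ++ [st], t, by simp, walkEnd_concat u s st⟩

end Walks

namespace SignedDigraph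

variable {V : Type*} {G : SignedDigraph V}

lemma isWalk_append {u : V} {s t : List (V × Bool)} :
    G.IsWalk u (s ++ t) ↔ G.IsWalk u s ∧ G.IsWalk (walkEnd u s) t := by
  induction s generalizing u with
  | nil => simp [IsWalk, walkEnd]
  | cons st s ih => simp only [List.cons_append, IsWalk, ih, walkEnd_cons, and_assoc]

lemma Reach.refl (u : V) : G.Reach u u := ⟨[], trivial, rfl⟩

lemma Reach.trans {u v w : V} (huv : G.Reach u v) (hvw : G.Reach v w) : G.Reach u w := by
  obtain ⟨s, hs, rfl⟩ := huv
  obtain ⟨t, ht, rfl⟩ := hvw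
  exact ⟨s ++ t, isWalk_append.2 ⟨hs, ht⟩, walkEnd_append u s t⟩

lemma reach_of_arc {j i : V} (h : G.Arc j i) : G.Reach j i := by
  rcases h with h | h
  exacts [⟨[(i, true)], ⟨h, trivial⟩, rfl⟩, ⟨[(i, false)], ⟨h, trivial⟩, rfl⟩]

lemma reach_of_reflTransGen {u v : V} (h : Relation.ReflTransGen G.Arc u v) : G.Reach u v := by
  induction h with
  | refl => exact Reach.refl u
  | tail _ harc ih => exact ih.trans (reach_of_arc harc)

/-- Cutting off the cycles of a walk one at a time, at the moment they close, leaves a path;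
without negative cycles this does not change the sign. -/
theorem exists_isPath_walkSign_eq (hneg : G.NoNegativeCycle) {u : V} {s : List (V × Bool)}
    (hs : G.IsWalk u s) :
    ∃ p, G.IsPath u p ∧ walkEnd u p = walkEnd u s ∧ walkSign p = walkSign s := by
  induction s using List.reverseRecOn with
  | nil => exact ⟨[], ⟨trivial, List.nodup_singleton u⟩, rfl, rfl⟩
  | append_singleton s st ih =>
    rw [isWalk_append] at hs
    obtain ⟨p, ⟨hpw, hpn⟩, hpe, hps⟩ := ih hs.1
    rw [walkEnd_concat, walkSign_concat, ← hps]
    by_cases hmem : st.1 ∈ u :: p.map Prod.fst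
    · obtain ⟨p₁, p₂, rfl, he₁⟩ := exists_append_walkEnd_eq hmem
      rw [isWalk_append, he₁] at hpw
      have hsplit :
          u :: (p₁ ++ p₂).map Prod.fst = (u :: p₁.map Prod.fst) ++ p₂.map Prod.fst := by
        simp
      rw [hsplit] at hpn
      have hcycle : G.IsCycle st.1 (p₂ ++ [st]) := by
        refine ⟨by simp, isWalk_append.2 ⟨hpw.2, ?_⟩, walkEnd_concat _ _ _, ?_⟩
        · rw [← he₁, ← walkEnd_append, hpe]; exact hs.2
        · simp only [List.map_append, List.map_cons, List.map_nil, List.dropLast_concat]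
          refine hpn.sublist ((List.singleton_sublist.2 ?_).append_right _)
          exact he₁ ▸ walkEnd_mem u p₁
      refine ⟨p₁, ⟨hpw.1, hpn.of_append_left⟩, he₁, ?_⟩
      have hsign := hneg _ _ hcycle
      rw [walkSign_concat] at hsign
      rw [walkSign_append]
      revert hsign
      cases walkSign p₁ <;> cases walkSign p₂ <;> cases st.2 <;> decide
    · refine ⟨p ++ [st], ⟨isWalk_append.2 ⟨hpw, hpe ▸ hs.2⟩, ?_⟩, walkEnd_concat _ _ _,
        walkSign_concat _ _⟩
      rw [List.map_append, ← List.cons_append]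
      exact hpn.append (List.nodup_singleton _) (by simpa using hmem)

theorem walkSign_eq_true_of_walkEnd_eq (hneg : G.NoNegativeCycle) {u : V}
    {s : List (V × Bool)} (hs : G.IsWalk u s) (he : walkEnd u s = u) : walkSign s = true := by
  obtain ⟨p, ⟨-, hpn⟩, hpe, hps⟩ := exists_isPath_walkSign_eq hneg hs
  cases p with
  | nil => exact hps.symm
  | cons st p =>
    have hmem := walkEnd_mem st.1 p
    rw [← walkEnd_cons u, hpe, he] at hmem
    exact absurd hmem (List.nodup_cons.1 hpn).1

theorem walkSign_eq_of_reach (hneg : G.NoNegativeCycle) {u v : V} (hback : G.Reach v u)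
    {s₁ s₂ : List (V × Bool)} (h₁ : G.IsWalk u s₁) (e₁ : walkEnd u s₁ = v)
    (h₂ : G.IsWalk u s₂) (e₂ : walkEnd u s₂ = v) : walkSign s₁ = walkSign s₂ := by
  obtain ⟨t, ht, et⟩ := hback
  have k₁ := walkSign_eq_true_of_walkEnd_eq hneg (isWalk_append.2 ⟨h₁, e₁ ▸ ht⟩)
    (by rw [walkEnd_append, e₁, et])
  have k₂ := walkSign_eq_true_of_walkEnd_eq hneg (isWalk_append.2 ⟨h₂, e₂ ▸ ht⟩)
    (by rw [walkEnd_append, e₂, et])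
  rw [walkSign_append] at k₁ k₂
  revert k₁ k₂
  cases walkSign s₁ <;> cases walkSign s₂ <;> cases walkSign t <;> decide

open Classical in
/-- The sign of the walks from `u` to `v`; they all agree when `v` also reaches `u`. -/
noncomputable def switching (G : SignedDigraph V) (u v : V) : Bool :=
  if h : G.Reach u v then walkSign h.choose else true

theorem switching_eq_walkSign (hneg : G.NoNegativeCycle) {u : V} {s : List (V × Bool)}
    (hs : G.IsWalk u s) (hback : G.Reach (walkEnd u s) u) :
    G.switching u (walkEnd u s) = walkSign s := by
  have hr : G.Reach u (walkEnd u s) := ⟨s, hs, rfl⟩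
  rw [switching, dif_pos hr]
  exact walkSign_eq_of_reach hneg hback hr.choose_spec.1 hr.choose_spec.2 hs rfl

theorem switching_of_step (hneg : G.NoNegativeCycle) {u j i : V} {b : Bool}
    (hj : G.Reach u j) (hi : G.Reach i u) (harc : if b then G.pos j i else G.neg j i) :
    G.switching u i = (G.switching u j == b) := by
  obtain ⟨s, hs, rfl⟩ := hj
  have hstep : G.IsWalk (walkEnd u s) [(i, b)] := ⟨harc, trivial⟩
  have hback : G.Reach (walkEnd u s) u := Reach.trans ⟨_, hstep, rfl⟩ hi
  have key := switching_eq_walkSign hneg (isWalk_append.2 ⟨hs, hstep⟩)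
    (by rwa [walkEnd_concat])
  rw [walkEnd_concat, walkSign_concat, ← switching_eq_walkSign hneg hs hback] at key
  exact key

end SignedDigraph

theorem Finset.exists_forall_reflTransGen_imp {α : Type*} {r : α → α → Prop} {A : Finset α}
    (hA : A.Nonempty) :
    ∃ u ∈ A, ∀ v ∈ A, Relation.ReflTransGen r v u → Relation.ReflTransGen r u v := by
  obtain ⟨u, huA, hmin⟩ := A.exists_minimalFor (fun v => {w | Relation.ReflTransGen r w v}) hA
  exact ⟨u, huA, fun v hv hvu =>
    hmin hv (fun w hw => Relation.ReflTransGen.trans hw hvu) Relation.ReflTransGen.refl⟩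

theorem pred_of_update_closed {ι : Type*} [Fintype ι] [DecidableEq ι] {β : ι → Type*}
    {P : (∀ k, β k) → Prop} {x y : ∀ k, β k} (hy : P y)
    (hP : ∀ k z, P z → P (Function.update z k (x k))) : P x := by
  have key : ∀ s : Finset ι, P (s.piecewise x y) := by
    intro s
    induction s using Finset.induction_on with
    | empty => simpa using hy
    | insert k s _ ih => rw [Finset.piecewise_insert]; exact hP k _ ih
  simpa using key Finset.univ

section InteractionArcs

open Function

variable {V : Type*} [DecidableEq V] {h : (V → Bool) → V → Bool} {j i : V}

def IArc (h : (V → Bool) → V → Bool) (j i : V) : Prop := posIArc h j i ∨ negIArc h j i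

lemma apply_update_of_not_negIArc (hn : ¬ negIArc h j i) {z : V → Bool} {b : Bool}
    (hz : h z i = b) : h (update z j b) i = b := by
  have hmono : h (update z j false) i = true → h (update z j true) i = true := fun h₀ => by
    by_contra h₁
    exact hn ⟨update z j false, update_self .., h₀, by simpa using h₁⟩
  rw [← update_eq_self j z] at hz
  cases b <;> cases hzj : z j <;> simp_all

lemma apply_update_not_of_not_posIArc (hp : ¬ posIArc h j i) {z : V → Bool} {b : Bool}
    (hz : h z i = b) : h (update z j (!b)) i = b := by
  have hanti : h (update z j false) i = false → h (update z j true) i = false := fun h₀ => by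
    by_contra h₁
    exact hp ⟨update z j false, update_self .., h₀, by simpa using h₁⟩
  rw [← update_eq_self j z] at hz
  cases b <;> cases hzj : z j <;> simp_all

lemma apply_update_of_not_iArc (harc : ¬ IArc h j i) (z : V → Bool) (c : Bool) :
    h (update z j c) i = h z i := by
  obtain ⟨hp, hn⟩ := not_or.1 harc
  cases hc : c == h z i
  · obtain rfl : c = !h z i := by revert hc; cases c <;> cases h z i <;> decide
    exact apply_update_not_of_not_posIArc hp rfl
  · rw [beq_iff_eq.1 hc]; exact apply_update_of_not_negIArc hn rfl

lemma apply_eq_of_forall_not_iArc [Fintype V] (hi : ∀ j, ¬ IArc h j i) (x y : V → Bool) :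
    h x i = h y i :=
  pred_of_update_closed (P := fun z => h z i = h y i) rfl fun k z hz =>
    (apply_update_of_not_iArc (hi k) z (x k)).trans hz

lemma IArc.exists_apply_eq (harc : IArc h j i) (b : Bool) : ∃ y, h y i = b := by
  rcases harc with ⟨x, -, h₀, h₁⟩ | ⟨x, -, h₁, h₀⟩ <;> cases b
  exacts [⟨x, h₀⟩, ⟨_, h₁⟩, ⟨_, h₀⟩, ⟨x, h₁⟩]

end InteractionArcs

section TrapCubes

open Function

variable {V : Type*} [DecidableEq V] {h : (V → Bool) → V → Bool}

def IsTrapCube (h : (V → Bool) → V → Bool) (S : Finset V) (μ : V → Bool) : Prop :=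
  ∀ x, (∀ k ∈ S, x k = μ k) → ∀ i ∈ S, h x i = μ i

def IsBalancingOn (h : (V → Bool) → V → Bool) (S : Finset V) (μ : V → Bool) : Prop :=
  ∀ j ∈ S, ∀ i ∈ S, (posIArc h j i → μ i = μ j) ∧ (negIArc h j i → μ i = !μ j)

lemma IsBalancingOn.not {S : Finset V} {μ : V → Bool} (hμ : IsBalancingOn h S μ) :
    IsBalancingOn h S (fun k => !μ k) := fun j hj i hi =>
  ⟨fun hp => by simp only [(hμ j hj i hi).1 hp], fun hn => by simp only [(hμ j hj i hi).2 hn]⟩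

/-- Starting from any configuration with the right value at `i` (which exists as `i` has an
in-arc), move toward `x` one coordinate at a time: balance says each move is monotone in the
direction that keeps the value `μ i`. -/
theorem IsBalancingOn.isTrapCube [Fintype V] {S : Finset V} {μ : V → Bool}
    (hμ : IsBalancingOn h S μ) (hclosed : ∀ j i, i ∈ S → IArc h j i → j ∈ S)
    (hin : ∀ i ∈ S, ∃ j, IArc h j i) : IsTrapCube h S μ := by
  intro x hx i hi
  obtain ⟨j, hj⟩ := hin i hi
  obtain ⟨y, hy⟩ := hj.exists_apply_eq (μ i)
  refine pred_of_update_closed (P := fun z => h z i = μ i) hy fun k z hz => ?_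
  by_cases harc : IArc h k i
  · have hk := hclosed k i hi harc
    have hexcl : ¬ (posIArc h k i ∧ negIArc h k i) := fun ⟨hp, hn⟩ => by
      have := ((hμ k hk i hi).1 hp).symm.trans ((hμ k hk i hi).2 hn)
      cases hμk : μ k <;> simp [hμk] at this
    rcases harc with hp | hn
    · rw [hx k hk, ← (hμ k hk i hi).1 hp]
      exact apply_update_of_not_negIArc (fun hn => hexcl ⟨hp, hn⟩) hz
    · rw [hx k hk, show μ k = !μ i by rw [(hμ k hk i hi).2 hn, Bool.not_not]]
      exact apply_update_not_of_not_posIArc (fun hp => hexcl ⟨hp, hn⟩) hz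
  · rw [apply_update_of_not_iArc harc]; exact hz

lemma isTrapCube_singleton [Fintype V] {i : V} (hi : ∀ j, ¬ IArc h j i) (x₀ : V → Bool) :
    IsTrapCube h {i} (fun _ => h x₀ i) := by
  intro x _ k hk
  rw [Finset.mem_singleton.1 hk]
  exact apply_eq_of_forall_not_iArc hi x x₀

def fixOn (h : (V → Bool) → V → Bool) (S : Finset V) (μ : V → Bool) :
    (V → Bool) → V → Bool :=
  fun x => h (S.piecewise μ x)

lemma flip_fixOn {S : Finset V} {μ : V → Bool} {j i : V} {a : Bool}
    (H : ∃ x : V → Bool, x j = false ∧ fixOn h S μ x i = a ∧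
      fixOn h S μ (update x j true) i = !a) :
    j ∉ S ∧ ∃ x : V → Bool, x j = false ∧ h x i = a ∧ h (update x j true) i = !a := by
  obtain ⟨x, hxj, h₀, h₁⟩ := H
  by_cases hj : j ∈ S
  · have : S.piecewise μ (update x j true) = S.piecewise μ x := by
      ext k; by_cases hkj : k = j
      · subst hkj; simp [hj]
      · simp [Finset.piecewise, hkj]
    rw [fixOn, this] at h₁
    cases a <;> simp_all [fixOn]
  · refine ⟨hj, S.piecewise μ x, by simp [hj, hxj], h₀, ?_⟩
    rwa [Finset.update_piecewise_of_notMem S μ x hj]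

lemma posIArc_of_posIArc_fixOn {S : Finset V} {μ : V → Bool} {j i : V}
    (H : posIArc (fixOn h S μ) j i) : j ∉ S ∧ posIArc h j i :=
  flip_fixOn H

lemma negIArc_of_negIArc_fixOn {S : Finset V} {μ : V → Bool} {j i : V}
    (H : negIArc (fixOn h S μ) j i) : j ∉ S ∧ negIArc h j i :=
  flip_fixOn H

lemma piecewise_eq_self_of_eqOn {S : Finset V} {μ z : V → Bool} (hz : ∀ k ∈ S, z k = μ k) :
    S.piecewise μ z = z := by
  ext k; by_cases hk : k ∈ S <;> simp [hk, hz]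

end TrapCubes

section Subnetworks

open Function

variable {V : Type*} [DecidableEq V] {G : SignedDigraph V} {A : Finset V}
  {h : (V → Bool) → V → Bool}

structure IsSubBNOn (G : SignedDigraph V) (A : Finset V) (h : (V → Bool) → V → Bool) :
    Prop where
  pos_of_posIArc : ∀ {j i}, i ∈ A → posIArc h j i → G.pos j i
  neg_of_negIArc : ∀ {j i}, i ∈ A → negIArc h j i → G.neg j i
  apply_congr : ∀ {x y : V → Bool}, (∀ a ∈ A, x a = y a) → ∀ i ∈ A, h x i = h y i

def FixedOn (h : (V → Bool) → V → Bool) (A : Finset V) (x : V → Bool) : Prop :=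
  ∀ i ∈ A, h x i = x i

def SyncOn (h : (V → Bool) → V → Bool) (A : Finset V) (w : List V) : Prop :=
  ∀ x y, ∀ i ∈ A, wordUpdate h w x i = wordUpdate h w y i

lemma IsBNOn.isSubBNOn_univ [Fintype V] (hf : IsBNOn h G) : IsSubBNOn G Finset.univ h where
  pos_of_posIArc _ := ((hf.1 _ _).2)
  neg_of_negIArc _ := ((hf.2 _ _).2)
  apply_congr hxy _ _ := by rw [funext fun a => hxy a (Finset.mem_univ a)]

namespace IsSubBNOn

lemma arc (hsub : IsSubBNOn G A h) {j i : V} (hi : i ∈ A) (harc : IArc h j i) : G.Arc j i :=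
  harc.imp (hsub.pos_of_posIArc hi) (hsub.neg_of_negIArc hi)

lemma mem_of_iArc (hsub : IsSubBNOn G A h) {j i : V} (hi : i ∈ A) (harc : IArc h j i) :
    j ∈ A := by
  by_contra hj
  have hflip : ∀ x : V → Bool, h (update x j true) i = h x i := fun x =>
    hsub.apply_congr (fun a ha => update_of_ne (ne_of_mem_of_not_mem ha hj) _ _) i hi
  rcases harc with ⟨x, -, h₀, h₁⟩ | ⟨x, -, h₀, h₁⟩ <;> simp [hflip, h₀] at h₁

lemma fixOn (hsub : IsSubBNOn G A h) (S : Finset V) (μ : V → Bool) :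
    IsSubBNOn G (A \ S) (fixOn h S μ) where
  pos_of_posIArc hi H := hsub.pos_of_posIArc (Finset.mem_sdiff.1 hi).1
    (posIArc_of_posIArc_fixOn H).2
  neg_of_negIArc hi H := hsub.neg_of_negIArc (Finset.mem_sdiff.1 hi).1
    (negIArc_of_negIArc_fixOn H).2
  apply_congr {x y} hxy i hi := by
    refine hsub.apply_congr (fun a ha => ?_) i (Finset.mem_sdiff.1 hi).1
    by_cases haS : a ∈ S
    · simp [haS]
    · simp [haS, hxy a (Finset.mem_sdiff.2 ⟨ha, haS⟩)]

end IsSubBNOn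

lemma IsTrapCube.fixedOn_piecewise {S : Finset V} {μ x : V → Bool} (hμ : IsTrapCube h S μ)
    (hx : FixedOn (fixOn h S μ) (A \ S) x) : FixedOn h A (S.piecewise μ x) := by
  intro i hi
  by_cases hiS : i ∈ S
  · rw [Finset.piecewise_eq_of_mem _ _ _ hiS]
    exact hμ _ (fun k hk => Finset.piecewise_eq_of_mem _ _ _ hk) i hiS
  · rw [Finset.piecewise_eq_of_notMem _ _ _ hiS]
    exact hx i (Finset.mem_sdiff.2 ⟨hi, hiS⟩)

/-- In an initial strong component of the interaction digraph, the switching given by the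
signs of walks from a fixed vertex is balancing. -/
theorem exists_isTrapCube_pair [Fintype V] (hneg : G.NoNegativeCycle) (hsub : IsSubBNOn G A h)
    (hA : A.Nonempty) (hin : ∀ i ∈ A, ∃ j, IArc h j i) :
    ∃ S ⊆ A, ∃ u ∈ S, ∃ μ, IsTrapCube h S μ ∧ IsTrapCube h S (fun k => !μ k) := by
  classical
  let R : V → V → Prop := fun j i => i ∈ A ∧ IArc h j i
  obtain ⟨u, huA, hu⟩ := A.exists_forall_reflTransGen_imp (r := R) hA
  have hreach {a b : V} (hab : Relation.ReflTransGen R a b) : G.Reach a b :=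
    SignedDigraph.reach_of_reflTransGen
      (Relation.ReflTransGen.mono (fun _ _ (hR : R _ _) => hsub.arc hR.1 hR.2) _ _ hab)
  let S := A.filter fun v => Relation.ReflTransGen R u v ∧ Relation.ReflTransGen R v u
  have hclosed : ∀ j i, i ∈ S → IArc h j i → j ∈ S := by
    intro j i hi harc
    simp only [S, Finset.mem_filter] at hi ⊢
    have hjA := hsub.mem_of_iArc hi.1 harc
    have hju : Relation.ReflTransGen R j u := .head ⟨hi.1, harc⟩ hi.2.2
    exact ⟨hjA, hu j hjA hju, hju⟩
  have hbal : IsBalancingOn h S (G.switching u) := by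
    intro j hj i hi
    simp only [S, Finset.mem_filter] at hj hi
    refine ⟨fun hp => ?_, fun hn => ?_⟩
    · simpa using G.switching_of_step (b := true) hneg (hreach hj.2.1) (hreach hi.2.2)
        (hsub.pos_of_posIArc hi.1 hp)
    · simpa using G.switching_of_step (b := false) hneg (hreach hj.2.1) (hreach hi.2.2)
        (hsub.neg_of_negIArc hi.1 hn)
  have hinS : ∀ i ∈ S, ∃ j, IArc h j i := fun i hi => hin i (Finset.filter_subset _ _ hi)
  exact ⟨S, Finset.filter_subset _ _, u, Finset.mem_filter.2 ⟨huA, .refl, .refl⟩,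
    G.switching u, hbal.isTrapCube hclosed hinS, hbal.not.isTrapCube hclosed hinS⟩

theorem exists_fixedOn [Fintype V] (hneg : G.NoNegativeCycle) (hsub : IsSubBNOn G A h) :
    ∃ x, FixedOn h A x := by
  induction A using Finset.strongInduction generalizing h with
  | _ A ih =>
  rcases A.eq_empty_or_nonempty with rfl | hA
  · exact ⟨fun _ => false, fun i hi => absurd hi (Finset.notMem_empty i)⟩
  obtain ⟨S, hSA, hS, μ, hμ⟩ : ∃ S ⊆ A, S.Nonempty ∧ ∃ μ, IsTrapCube h S μ := by
    by_cases hin : ∀ i ∈ A, ∃ j, IArc h j i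
    · obtain ⟨S, hSA, u, hu, μ, hμ, -⟩ := exists_isTrapCube_pair hneg hsub hA hin
      exact ⟨S, hSA, ⟨u, hu⟩, μ, hμ⟩
    · push Not at hin
      obtain ⟨i, hi, hsrc⟩ := hin
      exact ⟨{i}, by simpa using hi, Finset.singleton_nonempty i, _,
        isTrapCube_singleton hsrc (fun _ => false)⟩
  obtain ⟨x, hx⟩ := ih (A \ S) (Finset.sdiff_ssubset hSA hS) (hsub.fixOn S μ)
  exact ⟨_, hμ.fixedOn_piecewise hx⟩

end Subnetworks

lemma fixedOn_univ_iff {V : Type*} [Fintype V] {h : (V → Bool) → V → Bool} {x : V → Bool} :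
    FixedOn h Finset.univ x ↔ h x = x :=
  ⟨fun hx => funext fun i => hx i (Finset.mem_univ i), fun hx i _ => congrFun hx i⟩

section Words

open Function

variable {V : Type*} [DecidableEq V] {h : (V → Bool) → V → Bool}

lemma wordUpdate_cons (l : V) (w : List V) (x : V → Bool) :
    wordUpdate h (l :: w) x = wordUpdate h w (localUpdate h l x) := rfl

lemma wordUpdate_apply_of_notMem {w : List V} {i : V} (hi : i ∉ w) (x : V → Bool) :
    wordUpdate h w x i = x i := by
  induction w generalizing x with
  | nil => rfl
  | cons l w ih =>
    rw [wordUpdate_cons, ih (fun hw => hi (List.mem_cons_of_mem _ hw)), localUpdate,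
      update_of_ne (List.ne_of_not_mem_cons hi)]

lemma wordUpdate_eq_self {x : V → Bool} (hx : h x = x) (w : List V) : wordUpdate h w x = x := by
  induction w with
  | nil => rfl
  | cons l w ih => rw [wordUpdate_cons, localUpdate, hx, update_eq_self, ih]

lemma wordUpdate_fixOn {S : Finset V} {μ : V → Bool} {w : List V} (hw : ∀ l ∈ w, l ∉ S)
    {z : V → Bool} (hz : ∀ k ∈ S, z k = μ k) :
    wordUpdate h w z = wordUpdate (fixOn h S μ) w z := by
  induction w generalizing z with
  | nil => rfl
  | cons l w ih =>
    have hlz : localUpdate (fixOn h S μ) l z = localUpdate h l z := by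
      rw [localUpdate, localUpdate, fixOn, piecewise_eq_self_of_eqOn hz]
    rw [wordUpdate_cons, wordUpdate_cons, hlz]
    refine ih (fun l' hl' => hw l' (List.mem_cons_of_mem _ hl')) fun k hk => ?_
    rw [localUpdate, update_of_ne (ne_of_mem_of_not_mem hk (hw l List.mem_cons_self))]
    exact hz k hk

lemma SyncWord.eq_of_fixed {w : List V} (hw : SyncWord h w) {x y : V → Bool} (hx : h x = x)
    (hy : h y = y) : x = y := by
  obtain ⟨c, hc⟩ := hw
  rw [← wordUpdate_eq_self hx w, ← wordUpdate_eq_self hy w, hc x, hc y]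

lemma SyncOn.syncWord [Fintype V] {w : List V} (hw : SyncOn h Finset.univ w) : SyncWord h w :=
  ⟨wordUpdate h w (fun _ => false), fun x => funext fun i => hw x _ i (Finset.mem_univ i)⟩

/-- A source is constant, so once it is updated it stays frozen for the rest of the word. -/
lemma SyncOn.cons_of_forall_not_iArc [Fintype V] {i : V} (hsrc : ∀ j, ¬ IArc h j i)
    {B : Finset V} {w : List V} (hiw : i ∉ w)
    (hsync : SyncOn (fixOn h {i} fun _ => h (fun _ => false) i) B w) :
    SyncOn h (insert i B) (i :: w) := by
  have hwi : ∀ l ∈ w, l ∉ ({i} : Finset V) := fun l hl hli =>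
    hiw (Finset.mem_singleton.1 hli ▸ hl)
  have hfrozen (z : V → Bool) :
      ∀ k ∈ ({i} : Finset V), localUpdate h i z k = h (fun _ => false) i := by
    intro k hk
    rw [Finset.mem_singleton.1 hk, localUpdate, update_self]
    exact apply_eq_of_forall_not_iArc hsrc _ _
  intro x y k hk
  rw [wordUpdate_cons, wordUpdate_cons, wordUpdate_fixOn hwi (hfrozen x),
    wordUpdate_fixOn hwi (hfrozen y)]
  rcases Finset.mem_insert.1 hk with rfl | hk
  · rw [wordUpdate_apply_of_notMem hiw, wordUpdate_apply_of_notMem hiw,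
      hfrozen x k (Finset.mem_singleton_self k), hfrozen y k (Finset.mem_singleton_self k)]
  · exact hsync _ _ k hk

end Words

section Synchronization

open Function

variable {V : Type*} [DecidableEq V] [Fintype V] {G : SignedDigraph V} {A : Finset V}
  {h : (V → Bool) → V → Bool}

/-- Without sources, the two opposite trap cubes of `exists_isTrapCube_pair` extend to two
distinct fixed points; so uniqueness provides a source, which is updated first. -/
theorem exists_syncOn_of_unique (hneg : G.NoNegativeCycle) (hsub : IsSubBNOn G A h)
    (huniq : ∀ x y, FixedOn h A x → FixedOn h A y → ∀ i ∈ A, x i = y i) :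
    ∃ w : List V, w.length = A.card ∧ (∀ l ∈ w, l ∈ A) ∧ SyncOn h A w := by
  induction A using Finset.strongInduction generalizing h with
  | _ A ih =>
  rcases A.eq_empty_or_nonempty with rfl | hA
  · exact ⟨[], rfl, by simp, fun _ _ i hi => absurd hi (Finset.notMem_empty i)⟩
  by_cases hin : ∀ i ∈ A, ∃ j, IArc h j i
  · obtain ⟨S, hSA, u, hu, μ, hμ, hμ'⟩ := exists_isTrapCube_pair hneg hsub hA hin
    obtain ⟨x, hx⟩ := exists_fixedOn hneg (hsub.fixOn S μ)
    obtain ⟨y, hy⟩ := exists_fixedOn hneg (hsub.fixOn S fun k => !μ k)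
    have := huniq _ _ (hμ.fixedOn_piecewise hx) (hμ'.fixedOn_piecewise hy) u (hSA hu)
    simp [Finset.piecewise_eq_of_mem _ _ _ hu] at this
  push Not at hin
  obtain ⟨i, hi, hsrc⟩ := hin
  have hiA : {i} ⊆ A := Finset.singleton_subset_iff.2 hi
  have hc := isTrapCube_singleton hsrc (fun _ => false)
  obtain ⟨w, hlen, hwA, hsync⟩ :=
    ih (A \ {i}) (Finset.sdiff_ssubset hiA (Finset.singleton_nonempty i)) (hsub.fixOn {i} _)
      fun x y hx hy k hk => by
        obtain ⟨hkA, hki⟩ := Finset.mem_sdiff.1 hk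
        simpa [Finset.piecewise_eq_of_notMem _ _ _ hki] using
          huniq _ _ (hc.fixedOn_piecewise hx) (hc.fixedOn_piecewise hy) k hkA
  have hiw : i ∉ w := fun hiw => (Finset.mem_sdiff.1 (hwA i hiw)).2 (Finset.mem_singleton_self i)
  refine ⟨i :: w, ?_, ?_, ?_⟩
  · rw [List.length_cons, hlen, ← Finset.card_sdiff_add_card_eq_card hiA, Finset.card_singleton]
  · simpa [hi] using fun l hl => (Finset.mem_sdiff.1 (hwA l hl)).1
  · simpa [Finset.insert_sdiff_self_of_mem hi] using hsync.cons_of_forall_not_iArc hsrc hiw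

end Synchronization

/-- Proposition 7 of the paper. Let `G` be a signed digraph on `n`
vertices without negative cycles and `f` a Boolean network on `G`. The following are
equivalent: (1) `f` has exactly one fixed point; (2) `f` has a synchronizing word of
length `n`; (3) `f` is synchronizing. -/
theorem statement18 {V : Type} [Fintype V] [DecidableEq V]
    (G : SignedDigraph V) (n : ℕ) (hn : Fintype.card V = n)
    (hneg : G.NoNegativeCycle)
    (f : (V → Bool) → V → Bool) (hf : IsBNOn f G) :
    ((∃! x : V → Bool, f x = x) ↔
      (∃ w : List V, w.length = n ∧ SyncWord f w)) ∧
    ((∃ w : List V, w.length = n ∧ SyncWord f w) ↔ Synchronizing f) := by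
  have hsub := hf.isSubBNOn_univ
  obtain ⟨x₀, hx₀⟩ := exists_fixedOn hneg hsub
  rw [fixedOn_univ_iff] at hx₀
  have unique_of_sync (w : List V) (hw : SyncWord f w) : ∃! x, f x = x :=
    ⟨x₀, hx₀, fun _ hy => hw.eq_of_fixed hy hx₀⟩
  have sync_of_unique : (∃! x, f x = x) → ∃ w : List V, w.length = n ∧ SyncWord f w := by
    rintro ⟨x, -, hx⟩
    obtain ⟨w, hlen, -, hw⟩ := exists_syncOn_of_unique hneg hsub fun y z hy hz _ _ => by
      rw [hx y (fixedOn_univ_iff.1 hy), hx z (fixedOn_univ_iff.1 hz)]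
    exact ⟨w, by rw [hlen, Finset.card_univ, hn], hw.syncWord⟩
  refine ⟨⟨sync_of_unique, fun ⟨w, _, hw⟩ => unique_of_sync w hw⟩, ?_⟩
  exact ⟨fun ⟨w, _, hw⟩ => ⟨w, hw⟩, fun ⟨w, hw⟩ => sync_of_unique (unique_of_sync w hw)⟩
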